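/- (Analogue of Vidal's theorem) The maximum probability p for which there exist real Kraus operators realizing a TRIO transformation taking |ψ_θ⟩ to |ψ_γ⟩ with probability p (and to the TR-invariant state |0⟩ with probability 1−p) equals min{(1 − cos θ)/(1 − cos γ), 1}, for θ ∈ [0,π/2], γ ∈ (0,π/2]. -/

import Mathlib

open Complex Matrix

/-- The standard state `|ψ_α⟩ = (1/√2)(e^{iα/2}|0⟩ + e^{-iα/2}|1⟩)`. -/
noncomputable def stdState (α : ℝ) : Fin 2 → ℂ := fun i =>
  if i = 0 then Complex.exp (Complex.I * (α : ℂ) / 2) / (Real.sqrt 2 : ℂ)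
  else Complex.exp (-(Complex.I * (α : ℂ)) / 2) / (Real.sqrt 2 : ℂ)

/-- The TR-invariant basis state `|0⟩`. -/
def ket0 : Fin 2 → ℂ := fun i => if i = 0 then 1 else 0

/-!
The quantity `τ(ψ) = 1 - |ψᵀψ|` (for `|ψ_α⟩`: `ψᵀψ = cos α`, so `τ = 1 - cos α`) is an
ensemble monotone under real Kraus operators: `∑ₖ Kₖᵀ Kₖ = 1` preserves both the Hermitian form
`ψ†ψ` and the bilinear form `ψᵀψ`, and the triangle inequality does the rest. The successful
branches alone carry `p · (1 - cos γ)`, whence `p (1 - cos γ) ≤ 1 - cos θ`.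

For attainability, conjugate by the real Hadamard matrix: `|ψ_α⟩` becomes
`(cos (α/2), i sin (α/2))`, on which diagonal and antidiagonal real Kraus operators act
transparently. For `θ ≤ γ` a diagonal operator rescales the first coordinate and a rank-one
operator collects the rest onto `|0⟩`; for `γ < θ` a diagonal and an antidiagonal operator
both land on `|ψ_γ⟩`.
-/

section Kraus

variable {ι m n : Type*}

theorem map_ofReal_mul {l : Type*} [Fintype m] (A : Matrix l m ℝ) (B : Matrix m n ℝ) :
    (A * B).map ofReal = A.map ofReal * B.map ofReal :=
  Matrix.map_mul (f := ofRealHom)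

variable [Fintype n]

theorem star_map_ofReal_mulVec (K : Matrix m n ℝ) (w : n → ℂ) :
    star (K.map ofReal *ᵥ w) = K.map ofReal *ᵥ star w := by
  ext i; simp [mulVec, dotProduct]

theorem ofReal_sum_norm_sq (x : n → ℂ) : ((∑ i, ‖x i‖ ^ 2 : ℝ) : ℂ) = star x ⬝ᵥ x := by
  simp [dotProduct, Complex.conj_mul']

theorem sum_norm_sq_smul (c : ℂ) (x : n → ℂ) :
    ∑ i, ‖(c • x) i‖ ^ 2 = ‖c‖ ^ 2 * ∑ i, ‖x i‖ ^ 2 := by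
  simp [mul_pow, Finset.mul_sum]

variable [Fintype ι] [Fintype m] [DecidableEq n]

theorem sum_map_ofReal_mulVec_dotProduct_of_kraus (K : ι → Matrix m n ℝ)
    (hK : ∑ k, (K k)ᵀ * K k = 1) (v w : n → ℂ) :
    ∑ k, ((K k).map ofReal *ᵥ v) ⬝ᵥ ((K k).map ofReal *ᵥ w) = v ⬝ᵥ w := by
  have hK' : ∑ k, ((K k)ᵀ * K k).map ofReal = 1 := by
    have := congrArg (ofRealHom.mapMatrix (m := n) (α := ℝ)) hK
    rwa [map_sum, map_one] at this
  have h : ∀ k, ((K k).map ofReal *ᵥ v) ⬝ᵥ ((K k).map ofReal *ᵥ w)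
      = (((K k)ᵀ * K k).map ofReal *ᵥ v) ⬝ᵥ w := by
    intro k
    rw [dotProduct_mulVec, ← transpose_transpose ((K k).map ofReal), vecMul_transpose,
      mulVec_mulVec, transpose_transpose, ← transpose_map, map_ofReal_mul]
  simp_rw [h, ← sum_dotProduct, ← sum_mulVec, hK', one_mulVec]

theorem sum_sum_norm_sq_map_ofReal_mulVec_of_kraus (K : ι → Matrix m n ℝ)
    (hK : ∑ k, (K k)ᵀ * K k = 1) (w : n → ℂ) :
    ∑ k, ∑ i, ‖((K k).map ofReal *ᵥ w) i‖ ^ 2 = ∑ i, ‖w i‖ ^ 2 := by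
  apply ofReal_injective
  rw [ofReal_sum, ofReal_sum_norm_sq]
  simp_rw [ofReal_sum_norm_sq, star_map_ofReal_mulVec]
  exact sum_map_ofReal_mulVec_dotProduct_of_kraus K hK _ w

end Kraus

section TauWeight

variable {n : Type*} [Fintype n]

/-- `p · τ(ψ)` for `x = √p • ψ` with `ψ` normalized, where `τ(ψ) = 1 - |ψᵀψ|`. -/
noncomputable def tauWeight (x : n → ℂ) : ℝ := ∑ i, ‖x i‖ ^ 2 - ‖x ⬝ᵥ x‖

theorem tauWeight_nonneg (x : n → ℂ) : 0 ≤ tauWeight x := by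
  rw [tauWeight, sub_nonneg]
  calc ‖x ⬝ᵥ x‖ ≤ ∑ i, ‖x i * x i‖ := norm_sum_le _ _
    _ = ∑ i, ‖x i‖ ^ 2 := by simp [sq]

theorem tauWeight_smul (c : ℂ) (x : n → ℂ) : tauWeight (c • x) = ‖c‖ ^ 2 * tauWeight x := by
  rw [tauWeight, tauWeight, sum_norm_sq_smul, smul_dotProduct, dotProduct_smul, smul_smul,
    smul_eq_mul, norm_mul, ← sq, norm_pow]
  ring

theorem sum_tauWeight_map_ofReal_mulVec_le_of_kraus {ι m : Type*} [Fintype ι] [Fintype m]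
    [DecidableEq n] (K : ι → Matrix m n ℝ) (hK : ∑ k, (K k)ᵀ * K k = 1) (w : n → ℂ) :
    ∑ k, tauWeight ((K k).map ofReal *ᵥ w) ≤ tauWeight w := by
  simp only [tauWeight, Finset.sum_sub_distrib, sum_sum_norm_sq_map_ofReal_mulVec_of_kraus K hK]
  gcongr
  rw [← sum_map_ofReal_mulVec_dotProduct_of_kraus K hK w w]
  exact norm_sum_le _ _

end TauWeight

def trioSuccessProbs {n : Type*} [Fintype n] [DecidableEq n] (ψ φ χ : n → ℂ) : Set ℝ :=
  {p : ℝ | ∃ (N : ℕ) (K : Fin N → Matrix n n ℝ) (s : Finset (Fin N)),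
    (∑ k, (K k)ᵀ * K k = 1) ∧
    p = ∑ k ∈ s, ∑ i, ‖((K k).map ofReal *ᵥ ψ) i‖ ^ 2 ∧
    (∀ k ∈ s, ∃ c : ℂ, (K k).map ofReal *ᵥ ψ = c • φ) ∧
    (∀ k ∉ s, ∃ c : ℂ, (K k).map ofReal *ᵥ ψ = c • χ)}

section TrioSuccessProbs

variable {n : Type*} [Fintype n] [DecidableEq n] {ψ φ χ : n → ℂ} {p : ℝ}

theorem le_sum_norm_sq_of_mem_trioSuccessProbs (hp : p ∈ trioSuccessProbs ψ φ χ) :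
    p ≤ ∑ i, ‖ψ i‖ ^ 2 := by
  obtain ⟨N, K, s, hK, rfl, -⟩ := hp
  rw [← sum_sum_norm_sq_map_ofReal_mulVec_of_kraus K hK ψ]
  exact Finset.sum_le_sum_of_subset_of_nonneg (Finset.subset_univ s)
    fun _ _ _ => Finset.sum_nonneg fun _ _ => sq_nonneg _

theorem mul_tauWeight_le_of_mem_trioSuccessProbs (hφ : ∑ i, ‖φ i‖ ^ 2 = 1)
    (hp : p ∈ trioSuccessProbs ψ φ χ) : p * tauWeight φ ≤ tauWeight ψ := by
  obtain ⟨N, K, s, hK, rfl, hsucc, -⟩ := hp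
  calc (∑ k ∈ s, ∑ i, ‖((K k).map ofReal *ᵥ ψ) i‖ ^ 2) * tauWeight φ
      = ∑ k ∈ s, tauWeight ((K k).map ofReal *ᵥ ψ) := by
        rw [Finset.sum_mul]
        refine Finset.sum_congr rfl fun k hk => ?_
        obtain ⟨c, hc⟩ := hsucc k hk
        rw [hc, sum_norm_sq_smul, hφ, mul_one, tauWeight_smul]
    _ ≤ ∑ k, tauWeight ((K k).map ofReal *ᵥ ψ) :=
        Finset.sum_le_sum_of_subset_of_nonneg (Finset.subset_univ s)
          fun k _ _ => tauWeight_nonneg _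
    _ ≤ tauWeight ψ := sum_tauWeight_map_ofReal_mulVec_le_of_kraus K hK ψ

theorem mem_trioSuccessProbs_map_ofReal_mulVec {O : Matrix n n ℝ} (hO : Oᵀ * O = 1)
    (hp : p ∈ trioSuccessProbs ψ φ χ) :
    p ∈ trioSuccessProbs (O.map ofReal *ᵥ ψ) (O.map ofReal *ᵥ φ) (O.map ofReal *ᵥ χ) := by
  obtain ⟨N, K, s, hK, rfl, hsucc, hfail⟩ := hp
  have hO' : O * Oᵀ = 1 := mul_eq_one_comm.mp hO
  have hconj : ∀ k, (O * K k * Oᵀ).map ofReal *ᵥ (O.map ofReal *ᵥ ψ)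
      = O.map ofReal *ᵥ ((K k).map ofReal *ᵥ ψ) := by
    intro k
    rw [map_ofReal_mul, mulVec_mulVec, Matrix.mul_assoc, ← map_ofReal_mul Oᵀ, hO,
      Matrix.map_one _ rfl rfl, Matrix.mul_one, map_ofReal_mul, mulVec_mulVec]
  have hnorm : ∀ x : n → ℂ, ∑ i, ‖(O.map ofReal *ᵥ x) i‖ ^ 2 = ∑ i, ‖x i‖ ^ 2 := fun x => by
    simpa using sum_sum_norm_sq_map_ofReal_mulVec_of_kraus (fun _ : Unit => O) (by simpa) x
  refine ⟨N, fun k => O * K k * Oᵀ, s, ?_, ?_, ?_, ?_⟩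
  · calc ∑ k, (O * K k * Oᵀ)ᵀ * (O * K k * Oᵀ) = O * (∑ k, (K k)ᵀ * K k) * Oᵀ := by
          simp only [Matrix.transpose_mul, transpose_transpose, Finset.mul_sum, Finset.sum_mul,
            Matrix.mul_assoc]
          simp [← Matrix.mul_assoc Oᵀ, hO]
      _ = 1 := by rw [hK, Matrix.mul_one, hO']
  · simp only [hconj, hnorm]
  · intro k hk
    obtain ⟨c, hc⟩ := hsucc k hk
    exact ⟨c, by rw [hconj, hc, mulVec_smul]⟩
  · intro k hk
    obtain ⟨c, hc⟩ := hfail k hk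
    exact ⟨c, by rw [hconj, hc, mulVec_smul]⟩

theorem trioSuccessProbs_map_ofReal_mulVec {O : Matrix n n ℝ} (hO : Oᵀ * O = 1) :
    trioSuccessProbs (O.map ofReal *ᵥ ψ) (O.map ofReal *ᵥ φ) (O.map ofReal *ᵥ χ)
      = trioSuccessProbs ψ φ χ := by
  have hinv : ∀ x : n → ℂ, (Oᵀ).map ofReal *ᵥ (O.map ofReal *ᵥ x) = x := fun x => by
    rw [mulVec_mulVec, ← map_ofReal_mul, hO, Matrix.map_one _ rfl rfl, one_mulVec]
  refine Set.Subset.antisymm (fun p hp => ?_) fun p => mem_trioSuccessProbs_map_ofReal_mulVec hO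
  have hOT : Oᵀᵀ * Oᵀ = 1 := by rw [transpose_transpose, mul_eq_one_comm.mp hO]
  simpa only [hinv] using mem_trioSuccessProbs_map_ofReal_mulVec hOT hp

end TrioSuccessProbs

theorem Real.cos_half_sq (x : ℝ) : Real.cos (x / 2) ^ 2 = (1 + Real.cos x) / 2 := by
  rw [Real.cos_sq, mul_div_cancel₀ x two_ne_zero]; ring

theorem Real.sin_half_sq (x : ℝ) : Real.sin (x / 2) ^ 2 = (1 - Real.cos x) / 2 := by
  rw [Real.sin_sq, Real.cos_half_sq]; ring

noncomputable def hadamardMatrix : Matrix (Fin 2) (Fin 2) ℝ := (√2)⁻¹ • !![1, 1; 1, -1]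

theorem hadamardMatrix_transpose_mul_self : hadamardMatrixᵀ * hadamardMatrix = 1 := by
  have h : (√2)⁻¹ * (√2)⁻¹ = (2⁻¹ : ℝ) := by rw [← mul_inv, Real.mul_self_sqrt zero_le_two]
  ext i j
  fin_cases i <;> fin_cases j <;> simp [hadamardMatrix, Matrix.mul_apply, Fin.sum_univ_two, h] <;>
    norm_num

noncomputable def frameState (α : ℝ) : Fin 2 → ℂ :=
  ![(Real.cos (α / 2) : ℂ), I * (Real.sin (α / 2) : ℂ)]

theorem hadamardMatrix_mulVec_frameState (α : ℝ) :
    hadamardMatrix.map ofReal *ᵥ frameState α = stdState α := by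
  have h0 : I * α / 2 = (α / 2 : ℝ) * I := by push_cast; ring
  have h1 : -(I * α) / 2 = (-(α / 2) : ℝ) * I := by push_cast; ring
  ext i
  fin_cases i <;>
  simp only [stdState, h0, h1, exp_mul_I, ← ofReal_cos, ← ofReal_sin, Real.cos_neg,
    Real.sin_neg] <;>
  simp [hadamardMatrix, frameState, mulVec, dotProduct, Fin.sum_univ_two] <;> ring

theorem hadamardMatrix_mulVec_const :
    hadamardMatrix.map ofReal *ᵥ ![((√2)⁻¹ : ℝ), ((√2)⁻¹ : ℝ)] = ket0 := by
  have h : ((√2 : ℝ) : ℂ)⁻¹ * ((√2 : ℝ) : ℂ)⁻¹ = 2⁻¹ := by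
    rw [← mul_inv, ← ofReal_mul, Real.mul_self_sqrt zero_le_two]; norm_num
  ext i
  fin_cases i <;> simp [hadamardMatrix, ket0, mulVec, dotProduct, Fin.sum_univ_two, h]
  norm_num

theorem sum_norm_sq_real_add_I_mul (r s : ℝ) :
    ∑ i, ‖(![(r : ℂ), I * s] : Fin 2 → ℂ) i‖ ^ 2 = r ^ 2 + s ^ 2 := by
  simp [Fin.sum_univ_two]

theorem dotProduct_self_real_add_I_mul (r s : ℝ) :
    (![(r : ℂ), I * s] : Fin 2 → ℂ) ⬝ᵥ ![(r : ℂ), I * s] = ((r ^ 2 - s ^ 2 : ℝ) : ℂ) := by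
  simp only [dotProduct, Fin.sum_univ_two, cons_val_zero, cons_val_one]
  push_cast
  linear_combination (s ^ 2 : ℂ) * I_sq

theorem sum_norm_sq_frameState (α : ℝ) : ∑ i, ‖frameState α i‖ ^ 2 = 1 := by
  rw [frameState, sum_norm_sq_real_add_I_mul, Real.cos_sq_add_sin_sq]

theorem tauWeight_frameState (α : ℝ) : tauWeight (frameState α) = 1 - |Real.cos α| := by
  rw [tauWeight, sum_norm_sq_frameState, frameState, dotProduct_self_real_add_I_mul, norm_real,
    Real.norm_eq_abs, ← Real.cos_two_mul', mul_div_cancel₀ α two_ne_zero]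

theorem sq_div_mem_trioSuccessProbs {a b c d : ℝ} {t : ℂ} (ht : t ≠ 0) (ha : a ≠ 0) (hd : d ≠ 0)
    (hcd : c ^ 2 + d ^ 2 = 1) (hbc : |b * c| ≤ |a * d|) :
    (b / d) ^ 2 ∈ trioSuccessProbs ![(a : ℂ), I * b] ![(c : ℂ), I * d] ![t, t] := by
  -- `diag (x, 1)` sends `(a, i b)` to `(b / d) • (c, i d)`; the rank-one operator with entries
  -- `u` completes it to `∑ Kᵀ K = 1` and sends `(a, i b)` onto the failure vector.
  set x := b * c / (a * d)
  set u := √((1 - x ^ 2) / 2)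
  have hx : x ^ 2 ≤ 1 := by
    rw [div_pow, div_le_one (by positivity)]
    exact sq_le_sq.mpr hbc
  have hu : u ^ 2 = (1 - x ^ 2) / 2 := Real.sq_sqrt (by linarith)
  have hsucc : (!![x, 0; 0, 1] : Matrix (Fin 2) (Fin 2) ℝ).map ofReal *ᵥ ![(a : ℂ), I * b]
      = ((b / d : ℝ) : ℂ) • ![(c : ℂ), I * d] := by
    have : (a : ℂ) ≠ 0 := ofReal_ne_zero.mpr ha
    have : (d : ℂ) ≠ 0 := ofReal_ne_zero.mpr hd
    ext i; fin_cases i <;> simp [mulVec, dotProduct, x] <;> field_simp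
  refine ⟨2, ![!![x, 0; 0, 1], !![u, 0; u, 0]], {0}, ?_, ?_, ?_, ?_⟩
  · ext i j
    fin_cases i <;> fin_cases j <;> simp [Fin.sum_univ_two, Matrix.mul_apply]
    linear_combination 2 * hu
  · rw [Finset.sum_singleton, Matrix.cons_val_zero, hsucc, sum_norm_sq_smul,
      sum_norm_sq_real_add_I_mul, hcd, mul_one, norm_real, Real.norm_eq_abs, sq_abs]
  · intro k hk
    rw [Finset.mem_singleton.mp hk]
    exact ⟨_, hsucc⟩
  · intro k hk
    obtain rfl : k = 1 := by fin_cases k <;> simp_all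
    refine ⟨u * a / t, ?_⟩
    ext i; fin_cases i <;> simp [mulVec, dotProduct] <;> field_simp

theorem sq_add_sq_mem_trioSuccessProbs {a b c d x y : ℝ} (χ : Fin 2 → ℂ) (ha : a ≠ 0)
    (hb : b ≠ 0) (hcd : c ^ 2 + d ^ 2 = 1) (hac : x ^ 2 * c ^ 2 + y ^ 2 * d ^ 2 = a ^ 2)
    (hbd : x ^ 2 * d ^ 2 + y ^ 2 * c ^ 2 = b ^ 2) :
    x ^ 2 + y ^ 2 ∈ trioSuccessProbs ![(a : ℂ), I * b] ![(c : ℂ), I * d] χ := by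
  have haC : (a : ℂ) ≠ 0 := ofReal_ne_zero.mpr ha
  have hbC : (b : ℂ) ≠ 0 := ofReal_ne_zero.mpr hb
  have h0 : (!![x * c / a, 0; 0, x * d / b] : Matrix (Fin 2) (Fin 2) ℝ).map ofReal
      *ᵥ ![(a : ℂ), I * b] = (x : ℂ) • ![(c : ℂ), I * d] := by
    ext i; fin_cases i <;> simp [mulVec, dotProduct] <;> field_simp
  have h1 : (!![0, -(y * c / b); y * d / a, 0] : Matrix (Fin 2) (Fin 2) ℝ).map ofReal
      *ᵥ ![(a : ℂ), I * b] = (-I * y) • ![(c : ℂ), I * d] := by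
    ext i
    fin_cases i <;> simp [mulVec, dotProduct] <;> field_simp
    linear_combination (y * d : ℂ) * I_sq
  refine ⟨2, ![!![x * c / a, 0; 0, x * d / b], !![0, -(y * c / b); y * d / a, 0]], Finset.univ,
    ?_, ?_, ?_, by simp⟩
  · ext i j
    fin_cases i <;> fin_cases j <;> simp [Fin.sum_univ_two, Matrix.mul_apply] <;> field_simp
    · linear_combination hac
    · linear_combination hbd
  · rw [Fin.sum_univ_two, Matrix.cons_val_zero, Matrix.cons_val_one, Matrix.cons_val_zero, h0, h1,
      sum_norm_sq_smul, sum_norm_sq_smul, sum_norm_sq_real_add_I_mul, hcd]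
    simp
  · intro k _
    fin_cases k
    exacts [⟨_, h0⟩, ⟨_, h1⟩]

theorem div_mem_trioSuccessProbs_frameState_of_le {θ γ : ℝ} {t : ℂ} (ht : t ≠ 0) (hθ : 0 ≤ θ)
    (hγ : 0 < γ) (hγπ : γ < Real.pi) (h : θ ≤ γ) :
    (1 - Real.cos θ) / (1 - Real.cos γ) ∈
      trioSuccessProbs (frameState θ) (frameState γ) ![t, t] := by
  have ha : 0 < Real.cos (θ / 2) := Real.cos_pos_of_mem_Ioo ⟨by linarith, by linarith⟩
  have hb : 0 ≤ Real.sin (θ / 2) :=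
    Real.sin_nonneg_of_nonneg_of_le_pi (by linarith) (by linarith)
  have hc : 0 ≤ Real.cos (γ / 2) := Real.cos_nonneg_of_mem_Icc ⟨by linarith, by linarith⟩
  have hd : 0 < Real.sin (γ / 2) := Real.sin_pos_of_pos_of_lt_pi (by linarith) (by linarith)
  have hbc : Real.sin (θ / 2) * Real.cos (γ / 2) ≤ Real.cos (θ / 2) * Real.sin (γ / 2) := by
    have := Real.sin_nonneg_of_nonneg_of_le_pi (x := γ / 2 - θ / 2) (by linarith) (by linarith)
    rw [Real.sin_sub] at this
    linarith
  have hp :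
      (1 - Real.cos θ) / (1 - Real.cos γ) = (Real.sin (θ / 2) / Real.sin (γ / 2)) ^ 2 := by
    rw [div_pow, Real.sin_half_sq, Real.sin_half_sq, div_div_div_cancel_right₀ two_ne_zero]
  rw [hp]
  refine sq_div_mem_trioSuccessProbs ht ha.ne' hd.ne' (Real.cos_sq_add_sin_sq _) ?_
  rwa [abs_of_nonneg (by positivity), abs_of_nonneg (by positivity)]

theorem one_mem_trioSuccessProbs_frameState_of_lt {θ γ : ℝ} (χ : Fin 2 → ℂ) (hγ : 0 < γ)
    (h : γ < θ) (hθ : θ ≤ Real.pi / 2) :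
    1 ∈ trioSuccessProbs (frameState θ) (frameState γ) χ := by
  have ha : Real.cos (θ / 2) ≠ 0 := (Real.cos_pos_of_mem_Ioo ⟨by linarith, by linarith⟩).ne'
  have hb : Real.sin (θ / 2) ≠ 0 :=
    (Real.sin_pos_of_pos_of_lt_pi (by linarith) (by linarith)).ne'
  have he : 0 ≤ Real.cos θ := Real.cos_nonneg_of_mem_Icc ⟨by linarith, by linarith⟩
  have hf : 0 < Real.cos γ := Real.cos_pos_of_mem_Ioo ⟨by linarith, by linarith⟩
  have hef : Real.cos θ ≤ Real.cos γ :=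
    Real.cos_le_cos_of_nonneg_of_le_pi hγ.le (by linarith) h.le
  -- `x ^ 2` and `y ^ 2` solve the two linear equations below, which are `∑ Kᵀ K = 1`.
  set x := √((Real.cos γ + Real.cos θ) / (2 * Real.cos γ))
  set y := √((Real.cos γ - Real.cos θ) / (2 * Real.cos γ))
  have hx : x ^ 2 = (Real.cos γ + Real.cos θ) / (2 * Real.cos γ) := Real.sq_sqrt (by positivity)
  have hy : y ^ 2 = (Real.cos γ - Real.cos θ) / (2 * Real.cos γ) :=
    Real.sq_sqrt (div_nonneg (by linarith) (by positivity))
  have hxy : x ^ 2 + y ^ 2 = 1 := by rw [hx, hy]; field_simp; ring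
  rw [← hxy]
  refine sq_add_sq_mem_trioSuccessProbs χ ha hb (Real.cos_sq_add_sin_sq _) ?_ ?_
  · rw [hx, hy, Real.cos_half_sq, Real.sin_half_sq, Real.cos_half_sq]; field_simp; ring
  · rw [hx, hy, Real.cos_half_sq, Real.sin_half_sq, Real.sin_half_sq]; field_simp; ring

/-- analogue of Vidal's theorem: the maximum probability `p` over all
TRIO measurements (real Kraus operators, `Σ_k K_k†K_k = 1`) whose branches in a
designated success set `s` are proportional to `|ψ_γ⟩` (these branches have total
probability `p`) and whose remaining branches are proportional to the TR-invariant
state `|0⟩`, equals `min{(1 - cos θ)/(1 - cos γ), 1}`. -/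
theorem vidal_analogue
    (θ γ : ℝ) (hθ : θ ∈ Set.Icc 0 (Real.pi / 2)) (hγ : γ ∈ Set.Ioc 0 (Real.pi / 2)) :
    IsGreatest
      {p : ℝ | ∃ (N : ℕ) (K : Fin N → Matrix (Fin 2) (Fin 2) ℝ) (s : Finset (Fin N)),
        (∑ k, (K k)ᵀ * K k = 1) ∧
        p = ∑ k ∈ s, ∑ i, ‖((K k).map Complex.ofReal).mulVec (stdState θ) i‖ ^ 2 ∧
        (∀ k ∈ s, ∃ c : ℂ,
          ((K k).map Complex.ofReal).mulVec (stdState θ) = c • stdState γ) ∧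
        (∀ k ∉ s, ∃ c : ℂ,
          ((K k).map Complex.ofReal).mulVec (stdState θ) = c • ket0)}
      (min ((1 - Real.cos θ) / (1 - Real.cos γ)) 1) := by
  obtain ⟨hθ0, hθ⟩ := hθ
  obtain ⟨hγ0, hγ⟩ := hγ
  have hπ := Real.pi_pos
  have hcosθ : 0 ≤ Real.cos θ := Real.cos_nonneg_of_mem_Icc ⟨by linarith, hθ⟩
  have hcosγ : 0 ≤ Real.cos γ := Real.cos_nonneg_of_mem_Icc ⟨by linarith, hγ⟩
  have hcosγ1 : Real.cos γ < 1 := by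
    simpa using Real.cos_lt_cos_of_nonneg_of_le_pi le_rfl (by linarith) hγ0
  change IsGreatest (trioSuccessProbs (stdState θ) (stdState γ) ket0) _
  rw [← hadamardMatrix_mulVec_frameState, ← hadamardMatrix_mulVec_frameState,
    ← hadamardMatrix_mulVec_const,
    trioSuccessProbs_map_ofReal_mulVec hadamardMatrix_transpose_mul_self]
  refine ⟨?_, fun p hp => le_min ?_ ?_⟩
  · rcases le_or_gt θ γ with h | h
    · have := Real.cos_le_cos_of_nonneg_of_le_pi hθ0 (by linarith) h
      rw [min_eq_left ((div_le_one (by linarith)).mpr (by linarith))]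
      exact div_mem_trioSuccessProbs_frameState_of_le (by simp) hθ0 hγ0 (by linarith) h
    · have := Real.cos_le_cos_of_nonneg_of_le_pi hγ0.le (by linarith) h.le
      rw [min_eq_right ((one_le_div (by linarith)).mpr (by linarith))]
      exact one_mem_trioSuccessProbs_frameState_of_lt _ hγ0 h hθ
  · have := mul_tauWeight_le_of_mem_trioSuccessProbs (sum_norm_sq_frameState γ) hp
    rw [tauWeight_frameState, tauWeight_frameState, abs_of_nonneg hcosθ,
      abs_of_nonneg hcosγ] at this
    rwa [le_div_iff₀ (by linarith)]
  · simpa only [sum_norm_sq_frameState] using le_sum_norm_sq_of_mem_trioSuccessProbs hp
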